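/- For all m ≥ 0 and 0 ≤ ℓ ≤ 2m, the q-binomial identity ∑_{j≥0} (−1)^j q^{j(j−1)/2} qbinom(2m−j, ℓ) qbinom(ℓ, j) = q^{ℓ(2m−ℓ)} holds, where qbinom denotes the Gaussian binomial coefficient (zero when the lower index is negative or exceeds the upper index). -/

import Mathlib

/-- The Gaussian q-binomial coefficient in `ℤ[q]`, via the q-Pascal recurrence;
it vanishes when the lower index exceeds the upper index. -/
noncomputable def qbinom : ℕ → ℕ → Polynomial ℤ
  | _, 0 => 1
  | 0, _ + 1 => 0
  | n + 1, k + 1 => qbinom n k + Polynomial.X ^ (k + 1) * qbinom n (k + 1)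

/-!
The sum is the `ℓ`-th iterate of the q-difference operator `f ↦ X ^ j * (f j - f (j + 1))`
evaluated at `j = 0`: one step of q-Pascal on `qbinom ℓ j` peels off one iterate.
The second q-Pascal rule `qbinom (n+1) (k+1) - qbinom n (k+1) = X ^ (n-k) * qbinom n k`
shows that this operator maps `j ↦ qbinom (N - j) (k + 1)` to `X ^ (N - 1 - k)` times
`j ↦ qbinom (N - 1 - j) k`, so after `ℓ` steps with `k = ℓ` only the monomial
`X ^ (ℓ * (N - ℓ))` is left (here `N = 2 * m`).
-/

open Polynomial Finset

lemma qbinom_zero_right (n : ℕ) : qbinom n 0 = 1 := by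
  cases n <;> rfl

lemma qbinom_succ_succ (n k : ℕ) :
    qbinom (n + 1) (k + 1) = qbinom n k + X ^ (k + 1) * qbinom n (k + 1) := rfl

lemma qbinom_eq_zero_of_lt {n k : ℕ} (h : n < k) : qbinom n k = 0 := by
  induction n generalizing k with
  | zero => obtain ⟨k, rfl⟩ := Nat.exists_eq_succ_of_ne_zero (by omega : k ≠ 0); rfl
  | succ n ih =>
    obtain ⟨k, rfl⟩ := Nat.exists_eq_succ_of_ne_zero (by omega : k ≠ 0)
    rw [qbinom_succ_succ, ih (by omega), ih (by omega), mul_zero, add_zero]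

lemma qbinom_succ_succ' (n k : ℕ) :
    qbinom (n + 1) (k + 1) = X ^ (n - k) * qbinom n k + qbinom n (k + 1) := by
  induction n generalizing k with
  | zero =>
    cases k with
    | zero => simp [qbinom_succ_succ, qbinom_zero_right, qbinom_eq_zero_of_lt]
    | succ k => simp [qbinom_succ_succ, qbinom_eq_zero_of_lt]
  | succ n ih =>
    cases k with
    | zero =>
      conv_lhs => rw [qbinom_succ_succ (n + 1) 0, ih 0]
      conv_rhs => rw [qbinom_succ_succ n 0]
      simp only [qbinom_zero_right, Nat.sub_zero]
      ring
    | succ k =>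
      conv_lhs => rw [qbinom_succ_succ (n + 1) (k + 1), ih k, ih (k + 1)]
      conv_rhs => rw [qbinom_succ_succ n k, qbinom_succ_succ n (k + 1)]
      rw [show n + 1 - (k + 1) = n - k by omega]
      rcases lt_or_ge k n with hk | hk
      · rw [show n - k = n - (k + 1) + 1 by omega]
        ring
      · rw [qbinom_eq_zero_of_lt (n := n) (k := k + 1) (by omega), Nat.sub_eq_zero_of_le hk]
        ring

lemma qbinom_succ_sub_qbinom (n k : ℕ) :
    qbinom (n + 1) (k + 1) - qbinom n (k + 1) = X ^ (n - k) * qbinom n k := by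
  rw [qbinom_succ_succ', add_sub_cancel_right]

lemma X_pow_mul_X_pow_sub_mul_qbinom (j n k : ℕ) :
    X ^ j * (X ^ (n - k) * qbinom n k) = X ^ (j + n - k) * qbinom n k := by
  rcases le_or_gt k n with hk | hk
  · rw [← mul_assoc, ← pow_add, Nat.add_sub_assoc hk]
  · simp [qbinom_eq_zero_of_lt hk]

noncomputable def qAltSign (j : ℕ) : ℤ[X] :=
  (-1) ^ j * X ^ (j * (j - 1) / 2)

lemma qAltSign_zero : qAltSign 0 = 1 := by
  simp [qAltSign]

lemma qAltSign_succ (j : ℕ) : qAltSign (j + 1) = -(X ^ j * qAltSign j) := by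
  simp only [qAltSign, Nat.triangle_succ, pow_succ, pow_add]
  ring

noncomputable def qAltBinomSum (ℓ : ℕ) (f : ℕ → ℤ[X]) : ℤ[X] :=
  ∑ j ∈ range (ℓ + 1), qAltSign j * f j * qbinom ℓ j

lemma qAltBinomSum_zero (f : ℕ → ℤ[X]) : qAltBinomSum 0 f = f 0 := by
  simp [qAltBinomSum, qAltSign_zero, qbinom_zero_right]

lemma qAltBinomSum_congr {ℓ : ℕ} {f g : ℕ → ℤ[X]} (h : ∀ j ≤ ℓ, f j = g j) :
    qAltBinomSum ℓ f = qAltBinomSum ℓ g :=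
  sum_congr rfl fun j hj => by rw [h j (Nat.lt_succ_iff.mp (mem_range.mp hj))]

lemma qAltBinomSum_const_mul (ℓ : ℕ) (c : ℤ[X]) (f : ℕ → ℤ[X]) :
    qAltBinomSum ℓ (fun j => c * f j) = c * qAltBinomSum ℓ f := by
  simp only [qAltBinomSum, mul_sum]
  exact sum_congr rfl fun j _ => by ring

lemma qAltBinomSum_succ (ℓ : ℕ) (f : ℕ → ℤ[X]) :
    qAltBinomSum (ℓ + 1) f = qAltBinomSum ℓ (fun j => X ^ j * (f j - f (j + 1))) := by
  have hshift : ∑ j ∈ range (ℓ + 1), X ^ j * qAltSign j * f j * qbinom ℓ j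
      = ∑ j ∈ range (ℓ + 1), qAltSign (j + 1) * f (j + 1) * (X ^ (j + 1) * qbinom ℓ (j + 1))
        + f 0 := by
    rw [← add_zero (∑ j ∈ range (ℓ + 1), _),
      ← mul_zero (X ^ (ℓ + 1) * qAltSign (ℓ + 1) * f (ℓ + 1)),
      ← qbinom_eq_zero_of_lt (Nat.lt_succ_self ℓ), ← sum_range_succ, sum_range_succ']
    congr 1
    · exact sum_congr rfl fun j _ => by ring
    · simp [qAltSign_zero, qbinom_zero_right]
  calc qAltBinomSum (ℓ + 1) f
      = ∑ j ∈ range (ℓ + 1), -(X ^ j * qAltSign j * f (j + 1) * qbinom ℓ j)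
        + (∑ j ∈ range (ℓ + 1), qAltSign (j + 1) * f (j + 1) * (X ^ (j + 1) * qbinom ℓ (j + 1))
          + f 0) := by
        rw [qAltBinomSum, sum_range_succ', ← add_assoc, ← sum_add_distrib]
        congr 1
        · exact sum_congr rfl fun j _ => by rw [qbinom_succ_succ, qAltSign_succ]; ring
        · simp [qAltSign_zero, qbinom_zero_right]
    _ = ∑ j ∈ range (ℓ + 1), -(X ^ j * qAltSign j * f (j + 1) * qbinom ℓ j)
        + ∑ j ∈ range (ℓ + 1), X ^ j * qAltSign j * f j * qbinom ℓ j := by rw [hshift]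
    _ = qAltBinomSum ℓ (fun j => X ^ j * (f j - f (j + 1))) := by
        rw [qAltBinomSum, ← sum_add_distrib]
        exact sum_congr rfl fun j _ => by ring

lemma qAltBinomSum_qbinom (ℓ i : ℕ) {N : ℕ} (h : ℓ ≤ N) :
    qAltBinomSum ℓ (fun j => qbinom (N - j) (ℓ + i))
      = X ^ (ℓ * (N - ℓ - i)) * qbinom (N - ℓ) i := by
  induction ℓ generalizing N with
  | zero => simp [qAltBinomSum_zero]
  | succ ℓ ih =>
    obtain ⟨M, rfl⟩ := Nat.exists_eq_add_of_le' (by omega : 1 ≤ N)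
    have hstep : ∀ j ≤ ℓ, X ^ j * (qbinom (M + 1 - j) (ℓ + 1 + i)
        - qbinom (M + 1 - (j + 1)) (ℓ + 1 + i)) = X ^ (M - (ℓ + i)) * qbinom (M - j) (ℓ + i) := by
      intro j hj
      rw [show M + 1 - j = M - j + 1 by omega, show M + 1 - (j + 1) = M - j by omega,
        show ℓ + 1 + i = ℓ + i + 1 by omega, qbinom_succ_sub_qbinom,
        X_pow_mul_X_pow_sub_mul_qbinom, show j + (M - j) = M by omega]
    rw [qAltBinomSum_succ, qAltBinomSum_congr hstep, qAltBinomSum_const_mul, ih (by omega),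
      ← mul_assoc, ← pow_add, show M + 1 - (ℓ + 1) = M - ℓ by omega, Nat.succ_mul,
      show M - (ℓ + i) = M - ℓ - i by omega, add_comm (M - ℓ - i)]

theorem stmt19 (m ℓ : ℕ) (h : ℓ ≤ 2 * m) :
    ∑ j ∈ Finset.range (ℓ + 1),
        (-1 : Polynomial ℤ) ^ j * Polynomial.X ^ (j * (j - 1) / 2) *
          qbinom (2 * m - j) ℓ * qbinom ℓ j
      = Polynomial.X ^ (ℓ * (2 * m - ℓ)) := by
  simpa [qAltBinomSum, qAltSign, qbinom_zero_right] using qAltBinomSum_qbinom ℓ 0 h
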